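/- arXiv:2307.12685 — 6 statements merged into one kernel-verified Lean document; each statement's English description precedes it below -/
import Mathlib

section
/- Feferman's theorem: A partial applicative structure A is combinatory complete if and only if there exist elements k, s ∈ A such that for all a, b, c ∈ A: k·a is defined; (k·a)·b is defined and equals a; s·a is defined; (s·a)·b is defined; and ((s·a)·b)·c ≃ (a·c)·(b·c), where ≃ is Kleene equality of partial terms (either both sides are undefined, or both are defined and equal). -/
/-! Combinatory completeness yields `k` and `s` as the elements representing the terms `x₀`
and `x₀x₂(x₁x₂)`. Conversely, `k` and `s` give bracket abstraction: `λ*x. a = k a`,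
`λ*x. x = s k k`, `λ*x. y = k y` and `λ*x. uv = s (λ*x. u) (λ*x. v)`. Since `k·a` and `s·a·b`
are always defined, `λ*x. t` is defined under every valuation, and the `k`/`s` equations give
`(λ*x. t)·a ≃ t[a/x]`. Abstracting `xₙ, …, x₀` one at a time from `t(x₀, …, xₙ)` yields `b`;
the partial applications `b·a₀⋯aᵢ` are values of abstractions, hence defined. -/

/-- Strict application of partial elements: for `papp app x y` to be defined,
both `x` and `y` must be defined. -/
def papp {A : Type*} (app : A → A → Part A) (x y : Part A) : Part A :=
  x.bind fun a => y.bind fun b => app a b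

/-- Terms over a partial applicative structure `A`: elements of `A`,
variables (indexed by `ℕ`), and application. -/
inductive PTerm (A : Type*) where
  | cnst : A → PTerm A
  | var : ℕ → PTerm A
  | ap : PTerm A → PTerm A → PTerm A

/-- Strict evaluation of a term under a valuation `ρ` of the variables
(this in particular evaluates the closed term obtained by substituting
`ρ i` for the variable `i`). -/
def PTerm.eval {A : Type*} (app : A → A → Part A) (ρ : ℕ → A) : PTerm A → Part A
  | .cnst a => Part.some a
  | .var n => Part.some (ρ n)
  | .ap t s => papp app (t.eval app ρ) (s.eval app ρ)

/-- All variables occurring in the term are `< m`. -/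
def PTerm.VarsLt {A : Type*} : PTerm A → ℕ → Prop
  | .cnst _, _ => True
  | .var n, m => n < m
  | .ap t s, m => t.VarsLt m ∧ s.VarsLt m

/-- The left-associated application `b · a₁ · ⋯ · aₙ` for a list `[a₁, …, aₙ]`. -/
def lapp {A : Type*} (app : A → A → Part A) (b : A) (as : List A) : Part A :=
  as.foldl (fun p a => p.bind fun x => app x a) (Part.some b)

/-- A partial applicative structure is combinatory complete if for every term
`t(x₁,…,xₙ,x)` (with variables among the first `n+1` variables, the last one
playing the role of `x`) there is `b` such that for all `a₁,…,aₙ,a`: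
`b·a₁·⋯·aₙ` is defined, and `b·a₁·⋯·aₙ·a ≃ t(a₁,…,aₙ,a)` (Kleene equality). -/
def CombComplete {A : Type*} (app : A → A → Part A) : Prop :=
  ∀ (n : ℕ) (t : PTerm A), t.VarsLt (n + 1) →
    ∃ b : A, ∀ ρ : ℕ → A,
      (lapp app b ((List.range n).map ρ)).Dom ∧
      lapp app b ((List.range (n + 1)).map ρ) = t.eval app ρ

section

variable {A : Type*} {app : A → A → Part A}

theorem papp_some_some (a b : A) : papp app (Part.some a) (Part.some b) = app a b := by
  simp [papp]

theorem lapp_singleton (b a : A) : lapp app b [a] = app b a := by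
  simp [lapp]

theorem lapp_append_singleton (b : A) (as : List A) (a : A) :
    lapp app b (as ++ [a]) = papp app (lapp app b as) (Part.some a) := by
  simp [lapp, papp]

namespace PTerm

/-- Bracket abstraction `λ* xᵢ. t` with respect to the combinators `k` and `s`. -/
def abstract (k s : A) (i : ℕ) : PTerm A → PTerm A
  | cnst a => ap (cnst k) (cnst a)
  | var j => if j = i then ap (ap (cnst s) (cnst k)) (cnst k) else ap (cnst k) (var j)
  | ap u v => ap (ap (cnst s) (abstract k s i u)) (abstract k s i v)

theorem VarsLt.abstract (k s : A) {i : ℕ} :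
    ∀ {t : PTerm A}, t.VarsLt (i + 1) → (t.abstract k s i).VarsLt i
  | cnst _, _ => ⟨trivial, trivial⟩
  | var j, h => by
    by_cases hj : j = i
    · simp [PTerm.abstract, hj, VarsLt]
    · simp [PTerm.abstract, hj, VarsLt, Nat.lt_of_le_of_ne (Nat.lt_succ_iff.mp h) hj]
  | ap _ _, h => ⟨⟨trivial, h.1.abstract k s⟩, h.2.abstract k s⟩

theorem eval_congr {ρ ρ' : ℕ → A} {m : ℕ} (hρ : ∀ j < m, ρ j = ρ' j) :
    ∀ {t : PTerm A}, t.VarsLt m → t.eval app ρ = t.eval app ρ'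
  | cnst _, _ => rfl
  | var j, h => by simp [eval, hρ j h]
  | ap _ _, h => by simp only [eval, eval_congr hρ h.1, eval_congr hρ h.2]

end PTerm

/-- Definedness of `s·a` is omitted: it follows from that of `s·a·b` by strictness. -/
structure IsKSPair (app : A → A → Part A) (k s : A) : Prop where
  k_app_dom : ∀ a, (app k a).Dom
  k_app_app : ∀ a b, papp app (app k a) (Part.some b) = Part.some a
  s_app_app_dom : ∀ a b, (papp app (app s a) (Part.some b)).Dom
  s_app_app_app : ∀ a b c, papp app (papp app (app s a) (Part.some b)) (Part.some c) =
    papp app (app a c) (app b c)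

namespace IsKSPair

open PTerm

variable {k s : A} (h : IsKSPair app k s)
include h

theorem s_app_dom (a : A) : (app s a).Dom :=
  Part.Dom.of_bind (h.s_app_app_dom a a)

theorem exists_eval_abstract_eq_some (i : ℕ) (ρ : ℕ → A) :
    ∀ t : PTerm A, ∃ e, (t.abstract k s i).eval app ρ = Part.some e
  | cnst a => by
    simp only [abstract, eval, papp_some_some]
    exact ⟨_, (Part.some_get (h.k_app_dom a)).symm⟩
  | var j => by
    by_cases hj : j = i
    · simp only [abstract, hj, if_true, eval, papp_some_some]
      exact ⟨_, (Part.some_get (h.s_app_app_dom k k)).symm⟩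
    · simp only [abstract, hj, if_false, eval, papp_some_some]
      exact ⟨_, (Part.some_get (h.k_app_dom (ρ j))).symm⟩
  | ap u v => by
    obtain ⟨eu, hu⟩ := exists_eval_abstract_eq_some i ρ u
    obtain ⟨ev, hv⟩ := exists_eval_abstract_eq_some i ρ v
    simp only [abstract, eval, hu, hv, papp_some_some]
    exact ⟨_, (Part.some_get (h.s_app_app_dom eu ev)).symm⟩

theorem s_k_k_app (a : A) : papp app (papp app (app s k) (Part.some k)) (Part.some a) =
    Part.some a := by
  obtain ⟨e, he⟩ : ∃ e, app k a = Part.some e := ⟨_, (Part.some_get (h.k_app_dom a)).symm⟩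
  rw [h.s_app_app_app, he, papp_some_some, ← h.k_app_app a e, he, papp_some_some]

theorem eval_abstract_app (i : ℕ) (ρ : ℕ → A) (a : A) :
    ∀ t : PTerm A, papp app ((t.abstract k s i).eval app ρ) (Part.some a) =
      t.eval app (Function.update ρ i a)
  | cnst c => by simp only [abstract, eval, papp_some_some, h.k_app_app]
  | var j => by
    by_cases hj : j = i
    · subst hj
      simp only [abstract, if_true, eval, papp_some_some, h.s_k_k_app, Function.update_self]
    · simp only [abstract, hj, if_false, eval, papp_some_some, h.k_app_app,
        Function.update_of_ne hj]
  | ap u v => by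
    obtain ⟨eu, hu⟩ := h.exists_eval_abstract_eq_some i ρ u
    obtain ⟨ev, hv⟩ := h.exists_eval_abstract_eq_some i ρ v
    have ihu := eval_abstract_app i ρ a u
    have ihv := eval_abstract_app i ρ a v
    rw [hu, papp_some_some] at ihu
    rw [hv, papp_some_some] at ihv
    simp only [abstract, eval, hu, hv, papp_some_some, h.s_app_app_app, ihu, ihv]

theorem combComplete : CombComplete app := by
  intro n
  induction n with
  | zero =>
    intro t ht
    obtain ⟨b, hb⟩ := h.exists_eval_abstract_eq_some 0 (fun _ => k) t
    refine ⟨b, fun ρ => ⟨trivial, ?_⟩⟩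
    have hclosed : (t.abstract k s 0).eval app ρ = Part.some b :=
      (eval_congr (fun j hj => absurd hj j.not_lt_zero) (ht.abstract k s)).trans hb
    rw [List.range_one, List.map_singleton, lapp_singleton, ← papp_some_some (app := app),
      ← hclosed, h.eval_abstract_app, Function.update_eq_self]
  | succ n ih =>
    intro t ht
    obtain ⟨b, hb⟩ := ih _ (ht.abstract k s)
    refine ⟨b, fun ρ => ?_⟩
    obtain ⟨e, he⟩ := h.exists_eval_abstract_eq_some (n + 1) ρ t
    refine ⟨by rw [(hb ρ).2, he]; trivial, ?_⟩
    rw [List.range_succ, List.map_append, List.map_singleton, lapp_append_singleton,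
      (hb ρ).2, h.eval_abstract_app, Function.update_eq_self]

end IsKSPair

theorem CombComplete.exists_isKSPair (h : CombComplete app) : ∃ k s, IsKSPair app k s := by
  obtain ⟨k, hk⟩ := h 1 (.var 0) (by simp [PTerm.VarsLt])
  obtain ⟨s, hs⟩ := h 2 (.ap (.ap (.var 0) (.var 2)) (.ap (.var 1) (.var 2)))
    (by simp [PTerm.VarsLt])
  refine ⟨k, s, fun a => ?_, fun a b => ?_, fun a b => ?_, fun a b c => ?_⟩
  · simpa [lapp] using (hk fun _ => a).1
  · simpa [lapp, papp, PTerm.eval, List.range_succ] using (hk fun i => if i = 0 then a else b).2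
  · simpa [lapp, papp, List.range_succ] using (hs fun i => if i = 0 then a else b).1
  · simpa [lapp, papp, PTerm.eval, List.range_succ] using
      (hs fun i => if i = 0 then a else if i = 1 then b else c).2

end

/-- Feferman's theorem: a pas `A` is combinatory complete iff it has elements
`k` and `s` such that for all `a, b, c`: `k·a↓`, `k·a·b = a`, `s·a↓`, `s·a·b↓`,
and `s·a·b·c ≃ (a·c)·(b·c)`. -/
theorem feferman {A : Type*} (app : A → A → Part A) :
    CombComplete app ↔
      ∃ k s : A, ∀ a b c : A,
        (app k a).Dom ∧
        papp app (app k a) (Part.some b) = Part.some a ∧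
        (app s a).Dom ∧
        (papp app (app s a) (Part.some b)).Dom ∧
        papp app (papp app (app s a) (Part.some b)) (Part.some c) =
          papp app (app a c) (app b c) := by
  constructor
  · intro h
    obtain ⟨k, s, hks⟩ := h.exists_isKSPair
    exact ⟨k, s, fun a b c => ⟨hks.k_app_dom a, hks.k_app_app a b, hks.s_app_dom a,
      hks.s_app_app_dom a b, hks.s_app_app_app a b c⟩⟩
  · rintro ⟨k, s, H⟩
    exact IsKSPair.combComplete ⟨fun a => (H a a a).1, fun a b => (H a b a).2.1,
      fun a b => (H a b a).2.2.2.1, fun a b c => (H a b c).2.2.2.2⟩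
end

section
/- Let (A, app) be a pas and let t : ℕ → ℕ satisfy: t n > 0 for all n, and for all n ≥ 1, φ_{t n}(0) is defined and equals n and φ_{t n}(m) is defined and equals t(n+1) for all m > 0. Let f : ℕ → A satisfy: for all a, b, c ∈ ℕ, if φ_a(b) is defined and equals c, then f a · f b is defined and equals f c. Then for every n ≥ 1 the n-fold left-associated application f(t 1) · f(t 1) · … · f(t 1) · f 0 (with n occurrences of f(t 1)) is defined and equals f n. In particular, the restriction of f to ℕ is completely determined by the two values f(t 1) and f 0. -/
/-- The `e`-th partial computable function on `ℕ`. -/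
def phi (e : ℕ) : ℕ →. ℕ :=
  Nat.Partrec.Code.eval (Denumerable.ofNat Nat.Partrec.Code e)

/-- The left-associated application `x · x · ⋯ · x` with `n + 1` occurrences
of `x`, in a pas `(A, app)` (strict application). -/
def nfold {A : Type*} (app : A → A → Part A) (x : A) : ℕ → Part A
  | 0 => Part.some x
  | n + 1 => (nfold app x n).bind fun y => app y x

/-- Let `(A, app)` be a pas, `t : ℕ → ℕ` as in the Lemma (`t n > 0`, and for
`n ≥ 1`: `φ_{t n}(0) = n` and `φ_{t n}(m) = t (n+1)` for `m > 0`), and let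
`f : ℕ → A` preserve applications of `K₁`. Then for every `n ≥ 1` the `n`-fold
left-associated application `f (t 1) · ⋯ · f (t 1) · f 0` (with `n`
occurrences of `f (t 1)`, here written with index `n = k + 1`) is defined and
equals `f n`. In particular `f` is determined by `f (t 1)` and `f 0`. -/
theorem nfold_application {A : Type*} (app : A → A → Part A) (t : ℕ → ℕ)
    (ht0 : ∀ n, 0 < t n)
    (ht : ∀ n, 1 ≤ n →
      phi (t n) 0 = Part.some n ∧
      ∀ m : ℕ, 0 < m → phi (t n) m = Part.some (t (n + 1)))
    (f : ℕ → A)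
    (hf : ∀ a b c : ℕ, phi a b = Part.some c → app (f a) (f b) = Part.some (f c)) :
    ∀ k : ℕ, (nfold app (f (t 1)) k).bind (fun y => app y (f 0)) = Part.some (f (k + 1)) := by
  have key : ∀ k : ℕ, nfold app (f (t 1)) k = Part.some (f (t (k + 1))) := by
    intro k
    induction k with
    | zero => rfl
    | succ n ih =>
      have h := (ht (n + 1) (Nat.le_add_left 1 n)).2 (t 1) (ht0 1)
      simp [nfold, ih, hf _ _ _ h]
  intro k
  rw [key k]
  have h := (ht (k + 1) (Nat.le_add_left 1 k)).1
  simp [hf _ _ _ h]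
end

section
/- Suppose Y ⊆ ℕ, (ψ, E) is a Y-computable presentation of a total combinatory algebra, and f : ℕ → ℕ is a weak embedding of Kleene's first model K₁ into (ψ, E). Then Y is not computable. (In particular, K₁ has no computable weak completion.) -/
/-- Partial recursive functions relative to an oracle `O : ℕ →. ℕ`
(relativization of Mathlib's `Nat.Partrec`). -/
inductive RecursiveInOracle (O : ℕ →. ℕ) : (ℕ →. ℕ) → Prop
  | zero : RecursiveInOracle O (pure 0)
  | succ : RecursiveInOracle O ↑Nat.succ
  | left : RecursiveInOracle O ↑fun n : ℕ => n.unpair.1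
  | right : RecursiveInOracle O ↑fun n : ℕ => n.unpair.2
  | oracle : RecursiveInOracle O O
  | pair {f g} : RecursiveInOracle O f → RecursiveInOracle O g →
      RecursiveInOracle O fun n => Nat.pair <$> f n <*> g n
  | comp {f g} : RecursiveInOracle O f → RecursiveInOracle O g →
      RecursiveInOracle O fun n => g n >>= f
  | prec {f g} : RecursiveInOracle O f → RecursiveInOracle O g →
      RecursiveInOracle O (Nat.unpaired fun a n =>
        n.rec (f a) fun y IH => do let i ← IH; g (Nat.pair a (Nat.pair y i)))
  | rfind {f} : RecursiveInOracle O f →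
      RecursiveInOracle O fun a => Nat.rfind fun n => (fun m => m = 0) <$> f (Nat.pair a n)

open scoped Classical in
/-- The characteristic function of a set `Y ⊆ ℕ`, as a partial function. -/
noncomputable def chi (Y : Set ℕ) : ℕ →. ℕ :=
  fun n => Part.some (if n ∈ Y then 1 else 0)

/-- `(ψ, E)` is a `Y`-computable presentation of a total combinatory algebra:
`ψ` is total and recursive in `Y`, `E` is an equivalence relation decidable in `Y`
which is a congruence for `ψ`, and there are combinators `k`, `s`. -/
structure YPresentation (Y : Set ℕ) (ψ : ℕ → ℕ → ℕ) (E : ℕ → ℕ → Prop) : Prop where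
  psi_rec : RecursiveInOracle (chi Y) (fun n : ℕ => Part.some (ψ n.unpair.1 n.unpair.2))
  equiv : Equivalence E
  E_rec : RecursiveInOracle (chi Y) (chi {n : ℕ | E n.unpair.1 n.unpair.2})
  congruence : ∀ {n n' m m'}, E n n' → E m m' → E (ψ n m) (ψ n' m')
  comb : ∃ k s : ℕ, ∀ a b c : ℕ,
    E (ψ (ψ k a) b) a ∧ E (ψ (ψ (ψ s a) b) c) (ψ (ψ a c) (ψ b c))

/-- `f` is a weak embedding of Kleene's first model `K₁` into `(ψ, E)`. -/
def WeakEmb (ψ : ℕ → ℕ → ℕ) (E : ℕ → ℕ → Prop) (f : ℕ → ℕ) : Prop :=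
  (∀ n m, E (f n) (f m) → n = m) ∧
  ∀ a b c : ℕ, phi a b = Part.some c → E (ψ (f a) (f b)) (f c)

/-!
Write `a · b` for `ψ a b` and `≈` for `E`. If `Y` were computable, so would be `ψ` and `E`. The
embedding `f` need not be computable, but `f σ · f n ≈ f (n + 1)` for a code `σ` of the successor
function, so `f` is `≈`-equivalent to the computable map `n ↦ (f σ · —)ⁿ (f 0)`. A computable weak
embedding `g` is impossible: let `e` be a code of the total function answering `1` if
`g e · g e ≈ g 0` and `0` otherwise. Then `g e · g e ≈ g (φ_e e)`, and injectivity of `g` modulo `≈`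
makes either answer wrong.
-/

theorem RecursiveInOracle.nat_partrec {O f : ℕ →. ℕ} (hO : Nat.Partrec O)
    (hf : RecursiveInOracle O f) : Nat.Partrec f := by
  induction hf with
  | zero => exact .zero
  | succ => exact .succ
  | left => exact .left
  | right => exact .right
  | oracle => exact hO
  | pair _ _ ihf ihg => exact ihf.pair ihg
  | comp _ _ ihf ihg => exact ihf.comp ihg
  | prec _ _ ihf ihg => exact ihf.prec ihg
  | rfind _ ihf => exact ihf.rfind

theorem ComputablePred.nat_partrec_chi {Y : Set ℕ} (hY : ComputablePred (· ∈ Y)) :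
    Nat.Partrec (chi Y) := by
  classical
  have hite : Computable fun n => if n ∈ Y then 1 else 0 :=
    ComputablePred.ite (Computable.const 1) (Computable.const 0) hY
  exact Partrec.nat_iff.1 (hite.partrec.of_eq fun n => by simp [chi])

theorem ComputablePred.comp {α β : Type*} [Primcodable α] [Primcodable β] {p : β → Prop}
    (hp : ComputablePred p) {g : α → β} (hg : Computable g) : ComputablePred fun a => p (g a) :=
  let ⟨_, hp⟩ := hp
  ⟨fun _ => inferInstance, hp.comp hg⟩

theorem Computable.iterate {α : Type*} [Primcodable α] {f : α → α} (hf : Computable f) (a : α) :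
    Computable fun n : ℕ => f^[n] a :=
  (Computable.nat_rec (h := fun _ p => f p.2) Computable.id (Computable.const a)
    (hf.comp (Computable.snd.comp Computable.snd)).to₂).of_eq
    fun n => by induction n with
      | zero => rfl
      | succ n ih => exact (congrArg f ih).trans (Function.iterate_succ_apply' f n a).symm

theorem RecursiveInOracle.computable {Y : Set ℕ} (hY : ComputablePred (· ∈ Y)) {F : ℕ → ℕ}
    (hF : RecursiveInOracle (chi Y) fun n => Part.some (F n)) : Computable F :=
  Partrec.nat_iff.2 (hF.nat_partrec hY.nat_partrec_chi)

theorem RecursiveInOracle.computablePred {Y S : Set ℕ} (hY : ComputablePred (· ∈ Y))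
    (hS : RecursiveInOracle (chi Y) (chi S)) : ComputablePred (· ∈ S) := by
  classical
  have hchi : Computable fun n => if n ∈ S then 1 else 0 := hS.computable hY
  refine ComputablePred.computable_iff.2
    ⟨fun n => decide ((if n ∈ S then 1 else 0) = 1), ?_, funext fun n => ?_⟩
  · exact (Primrec.eq.decide.to_comp.comp hchi (Computable.const 1)).of_eq fun n => rfl
  · by_cases hn : n ∈ S <;> simp [hn]

theorem exists_phi_eq {F : ℕ →. ℕ} (hF : Nat.Partrec F) : ∃ e, phi e = F := by
  obtain ⟨c, hc⟩ := Nat.Partrec.Code.exists_code.1 hF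
  exact ⟨Encodable.encode c, by simp [phi, hc]⟩

section Presentation

variable {ψ : ℕ → ℕ → ℕ} {E : ℕ → ℕ → Prop}

theorem YPresentation.computable₂_psi {Y : Set ℕ} (hP : YPresentation Y ψ E)
    (hY : ComputablePred (· ∈ Y)) : Computable₂ ψ :=
  ((hP.psi_rec.computable hY).comp Primrec₂.natPair.to_comp).of_eq fun p => by simp

theorem YPresentation.computablePred_rel {Y : Set ℕ} (hP : YPresentation Y ψ E)
    (hY : ComputablePred (· ∈ Y)) : ComputablePred fun p : ℕ × ℕ => E p.1 p.2 :=
  ((hP.E_rec.computablePred hY).comp Primrec₂.natPair.to_comp).of_eq fun p => by simp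

theorem WeakEmb.of_equiv (hE : Equivalence E)
    (hcong : ∀ {n n' m m'}, E n n' → E m m' → E (ψ n m) (ψ n' m')) {f g : ℕ → ℕ}
    (hf : WeakEmb ψ E f) (hgf : ∀ n, E (g n) (f n)) : WeakEmb ψ E g := by
  refine ⟨fun n m hnm => hf.1 n m ?_, fun a b c habc => ?_⟩
  · exact hE.trans (hE.trans (hE.symm (hgf n)) hnm) (hgf m)
  · exact hE.trans (hE.trans (hcong (hgf a) (hgf b)) (hf.2 a b c habc)) (hE.symm (hgf c))

theorem WeakEmb.iterate_equiv (hE : Equivalence E)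
    (hcong : ∀ {n n' m m'}, E n n' → E m m' → E (ψ n m) (ψ n' m')) {f : ℕ → ℕ}
    (hf : WeakEmb ψ E f) {σ : ℕ} (hσ : phi σ = fun n => Part.some (n + 1)) (n : ℕ) :
    E ((ψ (f σ))^[n] (f 0)) (f n) := by
  induction n with
  | zero => exact hE.refl _
  | succ n ih =>
    rw [Function.iterate_succ_apply']
    exact hE.trans (hcong (hE.refl _) ih) (hf.2 σ n (n + 1) (by rw [hσ]))

theorem WeakEmb.exists_computable (hE : Equivalence E)
    (hcong : ∀ {n n' m m'}, E n n' → E m m' → E (ψ n m) (ψ n' m')) (hψ : Computable₂ ψ)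
    {f : ℕ → ℕ} (hf : WeakEmb ψ E f) : ∃ g, Computable g ∧ WeakEmb ψ E g := by
  obtain ⟨σ, hσ⟩ := exists_phi_eq Nat.Partrec.succ
  exact ⟨_, (hψ.comp (Computable.const _) Computable.id).iterate (f 0),
    hf.of_equiv hE hcong (hf.iterate_equiv hE hcong hσ)⟩

theorem WeakEmb.not_computable (hE : Equivalence E) (hψ : Computable₂ ψ)
    (hEdec : ComputablePred fun p : ℕ × ℕ => E p.1 p.2) {g : ℕ → ℕ} (hg : WeakEmb ψ E g) :
    ¬ Computable g := by
  intro hgc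
  obtain ⟨d, hd, hdE⟩ := ComputablePred.computable_iff.1 hEdec
  have hEd : ∀ a b, E a b ↔ d (a, b) = true := fun a b => by rw [congrFun hdE (a, b)]
  set answer : ℕ → ℕ := fun x => bif d (ψ (g x) (g x), g 0) then 1 else 0
  have hanswer : Computable answer :=
    (hd.comp ((hψ.comp hgc hgc).pair (Computable.const _))).cond
      (Computable.const 1) (Computable.const 0)
  obtain ⟨e, he⟩ := exists_phi_eq (Partrec.nat_iff.1 hanswer.partrec)
  have hself : E (ψ (g e) (g e)) (g (answer e)) := hg.2 e e _ (by rw [he]; rfl)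
  cases hde : d (ψ (g e) (g e), g 0)
  · simp only [answer, hde, cond_false] at hself
    simp [(hEd _ _).1 hself] at hde
  · simp only [answer, hde, cond_true] at hself
    exact zero_ne_one (hg.1 0 1 (hE.trans (hE.symm ((hEd _ _).2 hde)) hself))

end Presentation

/-- If a total combinatory algebra has a `Y`-computable presentation `(ψ, E)`
and `K₁` weakly embeds into it, then `Y` is not computable. -/
theorem K1_no_computable_completion (Y : Set ℕ) (ψ : ℕ → ℕ → ℕ) (E : ℕ → ℕ → Prop)
    (hP : YPresentation Y ψ E) (f : ℕ → ℕ) (hf : WeakEmb ψ E f) :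
    ¬ ComputablePred (· ∈ Y) := by
  intro hY
  have hψ := hP.computable₂_psi hY
  obtain ⟨g, hgc, hg⟩ := hf.exists_computable hP.equiv hP.congruence hψ
  exact hg.not_computable hP.equiv hψ (hP.computablePred_rel hY) hgc
end

section
/- There exist sets K, S ⊆ ℕ such that for all X, Y, Z ⊆ ℕ: (K·X)·Y = X and ((S·X)·Y)·Z = (X·Z)·(Y·Z), where · denotes Scott's graph-model application. Consequently the power set of ℕ equipped with Scott's application is a total combinatory algebra (Scott's graph model 𝒢). -/
/-- Scott's graph-model application on subsets of `ℕ`: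
`A · B = {x | ∃ u, ⟨x, u⟩ ∈ A ∧ D_u ⊆ B}`, where `D_u` is the `u`-th finite
set of naturals (via the canonical `Denumerable (Finset ℕ)` coding). -/
def scottApp (A B : Set ℕ) : Set ℕ :=
  {x : ℕ | ∃ u : ℕ, Nat.pair x u ∈ A ∧ (Denumerable.ofNat (Finset ℕ) u : Set ℕ) ⊆ B}

namespace ScottAux

/-- The `u`-th finite set as a set. -/
def Dset (u : ℕ) : Set ℕ := ((Denumerable.ofNat (Finset ℕ) u : Finset ℕ) : Set ℕ)

/-- Encoding of finite sets matching the `Denumerable` decoding. -/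
def enc (s : Finset ℕ) : ℕ := @Encodable.encode (Finset ℕ) Denumerable.toEncodable s

lemma ofNat_enc (s : Finset ℕ) : Denumerable.ofNat (Finset ℕ) (enc s) = s :=
  Denumerable.ofNat_encode s

lemma Dset_encode (s : Finset ℕ) : Dset (enc s) = (s : Set ℕ) := by
  simp [Dset, ofNat_enc]

lemma mem_scottApp {A B : Set ℕ} {x : ℕ} :
    x ∈ scottApp A B ↔ ∃ u : ℕ, Nat.pair x u ∈ A ∧ Dset u ⊆ B := Iff.rfl

lemma scottApp_mono {A A' B B' : Set ℕ} (hA : A ⊆ A') (hB : B ⊆ B') :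
    scottApp A B ⊆ scottApp A' B' := by
  rintro x ⟨u, h1, h2⟩
  exact ⟨u, hA h1, h2.trans hB⟩

/-- The K combinator. -/
def Kset : Set ℕ := {n | n.unpair.1.unpair.1 ∈ Dset n.unpair.2}

/-- The S combinator. -/
def Sset : Set ℕ :=
  {n | n.unpair.1.unpair.1.unpair.1 ∈
      scottApp (scottApp (Dset n.unpair.2) (Dset n.unpair.1.unpair.1.unpair.2))
        (scottApp (Dset n.unpair.1.unpair.2) (Dset n.unpair.1.unpair.1.unpair.2))}

lemma mem_Kset {x v u : ℕ} : Nat.pair (Nat.pair x v) u ∈ Kset ↔ x ∈ Dset u := by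
  simp [Kset]

lemma mem_Sset {a c b u : ℕ} :
    Nat.pair (Nat.pair (Nat.pair a c) b) u ∈ Sset ↔
      a ∈ scottApp (scottApp (Dset u) (Dset c)) (scottApp (Dset b) (Dset c)) := by
  simp [Sset]

lemma K_law (X Y : Set ℕ) : scottApp (scottApp Kset X) Y = X := by
  ext x
  constructor
  · rintro ⟨v, ⟨u, hK, hu⟩, hv⟩
    exact hu (mem_Kset.mp hK)
  · intro hx
    refine ⟨enc (∅ : Finset ℕ),
      ⟨enc ({x} : Finset ℕ), mem_Kset.mpr ?_, ?_⟩, ?_⟩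
    · rw [Dset_encode]; simp
    · rw [ofNat_enc]; simpa using hx
    · rw [ofNat_enc]; simp

lemma S_law (X Y Z : Set ℕ) :
    scottApp (scottApp (scottApp Sset X) Y) Z =
      scottApp (scottApp X Z) (scottApp Y Z) := by
  ext a
  constructor
  · rintro ⟨c, ⟨b, ⟨u, hS, hu⟩, hb⟩, hc⟩
    have := mem_Sset.mp hS
    exact scottApp_mono (scottApp_mono hu hc) (scottApp_mono hb hc) this
  · rintro ⟨w, ⟨u, hXu, huZ⟩, hw⟩
    -- hw : Dset w ⊆ scottApp Y Z
    classical
    -- choose witnesses for each element of D_w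
    have hv : ∀ m ∈ (Denumerable.ofNat (Finset ℕ) w : Finset ℕ),
        ∃ v : ℕ, Nat.pair m v ∈ Y ∧ Dset v ⊆ Z := by
      intro m hm
      exact hw (by exact_mod_cast hm)
    set v : ℕ → ℕ := fun m =>
      if h : ∃ v : ℕ, Nat.pair m v ∈ Y ∧ Dset v ⊆ Z then h.choose else 0 with hvdef
    have hvspec : ∀ m ∈ (Denumerable.ofNat (Finset ℕ) w : Finset ℕ),
        Nat.pair m (v m) ∈ Y ∧ Dset (v m) ⊆ Z := by
      intro m hm
      obtain ⟨vm, hvm⟩ := hv m hm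
      have h : ∃ v : ℕ, Nat.pair m v ∈ Y ∧ Dset v ⊆ Z := ⟨vm, hvm⟩
      simp only [hvdef, dif_pos h]
      exact h.choose_spec
    -- finite sets
    set Dw : Finset ℕ := Denumerable.ofNat (Finset ℕ) w with hDw
    set uF : ℕ := enc ({Nat.pair (Nat.pair a w) u} : Finset ℕ) with huF
    set bF : ℕ := enc (Dw.image (fun m => Nat.pair m (v m))) with hbF
    set cF : ℕ := enc
      ((Denumerable.ofNat (Finset ℕ) u) ∪ Dw.biUnion (fun m => Denumerable.ofNat (Finset ℕ) (v m)))
      with hcF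
    have hDc_sub : Dset cF ⊆ Z := by
      rw [hcF, Dset_encode]
      intro z hz
      simp only [Finset.coe_union, Set.mem_union, Finset.coe_biUnion, Set.mem_iUnion] at hz
      rcases hz with hz | ⟨m, hm, hz⟩
      · exact huZ (by exact_mod_cast hz)
      · exact (hvspec m (by exact_mod_cast hm)).2 (by exact_mod_cast hz)
    have hDu_sub_c : Dset u ⊆ Dset cF := by
      rw [hcF, Dset_encode]
      intro z hz
      simp only [Finset.coe_union, Set.mem_union]
      left; exact_mod_cast hz
    refine ⟨cF, ⟨bF, ⟨uF, mem_Sset.mpr ?_, ?_⟩, ?_⟩, hDc_sub⟩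
    · -- a ∈ (D_uF · D_cF) · (D_bF · D_cF)
      refine ⟨w, ⟨u, ?_, hDu_sub_c⟩, ?_⟩
      · rw [huF, Dset_encode]; simp
      · -- Dset w ⊆ scottApp (Dset bF) (Dset cF)
        intro m hm
        have hm' : m ∈ Dw := by exact_mod_cast hm
        refine ⟨v m, ?_, ?_⟩
        · rw [hbF, Dset_encode]
          simp only [Finset.coe_image, Set.mem_image, Finset.mem_coe]
          exact ⟨m, hm', rfl⟩
        · rw [hcF, Dset_encode]
          intro z hz
          simp only [Finset.coe_union, Set.mem_union, Finset.coe_biUnion, Set.mem_iUnion,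
            Finset.mem_coe]
          right; exact ⟨m, hm', by exact_mod_cast hz⟩
    · rw [huF, ofNat_enc]
      intro z hz
      simp only [Finset.coe_singleton, Set.mem_singleton_iff] at hz
      subst hz; exact hXu
    · rw [hbF, ofNat_enc]
      intro z hz
      simp only [Finset.coe_image, Set.mem_image, Finset.mem_coe] at hz
      obtain ⟨m, hm, rfl⟩ := hz
      exact (hvspec m hm).1

end ScottAux

/-- There are sets `K, S ⊆ ℕ` satisfying the combinator laws for Scott's
graph-model application; hence `(Set ℕ, scottApp)` is a total combinatory
algebra (Scott's graph model `𝒢`). -/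
theorem scott_graph_model_combinators :
    ∃ K S : Set ℕ, ∀ X Y Z : Set ℕ,
      scottApp (scottApp K X) Y = X ∧
      scottApp (scottApp (scottApp S X) Y) Z =
        scottApp (scottApp X Z) (scottApp Y Z) := by
  exact ⟨ScottAux.Kset, ScottAux.Sset, fun X Y Z => ⟨ScottAux.K_law X Y, ScottAux.S_law X Y Z⟩⟩
end

section
/- Kleene's first model K₁ weakly embeds into Scott's model ℰ: there exists an injective map f : ℕ → Set ℕ such that each f n is computably enumerable and for all a, b, c ∈ ℕ, if φ_a(b) is defined and equals c then (f a)·(f b) = f c, where · denotes Scott's graph-model application. Thus ℰ is a weak completion of K₁. -/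
/-!
`f n` collects the codes of all finite K₁-computations starting from `n`: a run
`c₀ = n, c₁ = φ_{c₀}(b₁), …, cₖ = φ_{cₖ₋₁}(bₖ)` is coded as
`⟨⋯⟨⟨tag cₖ, {tag bₖ}⟩, {tag bₖ₋₁}⟩⋯, {tag b₁}⟩` with `tag c = ⟨c, {0}⟩`, where `{m}` denotes the
code of the finite set `{m}`. Equivalently, `f n` consists of `tag n` and of the pairs
`⟨y, {tag b}⟩` with `y ∈ f (φ_n b)`. As `tag b' ∈ f b` only for `b' = b` and `0 ∉ f b`, the
elements `⟨x, u⟩ ∈ f a` with `D_u ⊆ f b` are exactly those with `u = {tag b}` and `x ∈ f (φ_a b)`,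
so `f a · f b = f (φ_a b)`; the tags give injectivity. Each `f n` is c.e. because a run can be
guessed together with a step bound for `Code.evaln`.
-/

def singletonCode (t : ℕ) : ℕ := Nat.pair t 0 + 1

theorem ofNat_singletonCode (t : ℕ) :
    Denumerable.ofNat (Finset ℕ) (singletonCode t) = {t} := by
  show Finset.map (Denumerable.eqv ℕ).symm.toEmbedding
    (Denumerable.raise'Finset (Denumerable.ofNat (List ℕ) (Nat.pair t 0).succ) 0) = _
  rw [Denumerable.list_ofNat_succ]
  simp only [Denumerable.eqv, Equiv.symm_mk, Denumerable.raise'Finset, Denumerable.raise',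
    Nat.unpair_pair, Denumerable.ofNat_nat, add_zero, Denumerable.list_ofNat_zero,
    Multiset.coe_singleton]
  rfl

theorem singletonCode_ne_zero (t : ℕ) : singletonCode t ≠ 0 := Nat.succ_ne_zero _

theorem singletonCode_injective : Function.Injective singletonCode := fun s t h => by
  simpa [singletonCode, Nat.pair_eq_pair] using h

theorem pair_singletonCode_ne_zero (y t : ℕ) : Nat.pair y (singletonCode t) ≠ 0 := fun h =>
  singletonCode_ne_zero t (by simpa using congrArg (fun m => (Nat.unpair m).2) h)

-- With the neighbourhood `∅` instead of `{0}`, `n` would lie in `f n · B` for every `B`.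
def tag (n : ℕ) : ℕ := Nat.pair n (singletonCode 0)

def kleeneIter (n : ℕ) (bs : List ℕ) : Part ℕ := bs.foldlM phi n

theorem kleeneIter_nil (n : ℕ) : kleeneIter n [] = Part.some n := rfl

theorem mem_kleeneIter_cons {n b d : ℕ} {bs : List ℕ} :
    d ∈ kleeneIter n (b :: bs) ↔ ∃ c ∈ phi n b, d ∈ kleeneIter c bs := by
  show d ∈ (phi n b).bind (fun c => kleeneIter c bs) ↔ _
  exact Part.mem_bind_iff

def pathCode (c : ℕ) (bs : List ℕ) : ℕ :=
  bs.foldr (fun b y => Nat.pair y (singletonCode (tag b))) (tag c)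

def k1Embedding (n : ℕ) : Set ℕ := {x | ∃ bs, ∃ c ∈ kleeneIter n bs, pathCode c bs = x}

theorem mem_k1Embedding_iff {x n : ℕ} :
    x ∈ k1Embedding n ↔ x = tag n ∨
      ∃ b c y, c ∈ phi n b ∧ y ∈ k1Embedding c ∧ x = Nat.pair y (singletonCode (tag b)) := by
  constructor
  · rintro ⟨_ | ⟨b, bs⟩, c, hc, rfl⟩
    · exact Or.inl (congrArg tag (Part.mem_some_iff.1 hc))
    · obtain ⟨c', hc', hc⟩ := mem_kleeneIter_cons.1 hc
      exact Or.inr ⟨b, c', pathCode c bs, hc', ⟨bs, c, hc, rfl⟩, rfl⟩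
  · rintro (rfl | ⟨b, c, _, hc, ⟨bs, d, hd, rfl⟩, rfl⟩)
    · exact ⟨[], n, Part.mem_some n, rfl⟩
    · exact ⟨b :: bs, d, mem_kleeneIter_cons.2 ⟨c, hc, hd⟩, rfl⟩

theorem tag_mem_k1Embedding {n : ℕ} : tag n ∈ k1Embedding n :=
  mem_k1Embedding_iff.2 (Or.inl rfl)

theorem ne_zero_of_mem_k1Embedding {x n : ℕ} (hx : x ∈ k1Embedding n) : x ≠ 0 := by
  rcases mem_k1Embedding_iff.1 hx with rfl | ⟨b, c, y, -, -, rfl⟩ <;>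
    exact pair_singletonCode_ne_zero _ _

theorem tag_mem_k1Embedding_iff {m n : ℕ} : tag m ∈ k1Embedding n ↔ m = n := by
  refine ⟨fun h => ?_, fun h => h ▸ tag_mem_k1Embedding⟩
  rcases mem_k1Embedding_iff.1 h with h | ⟨b, c, y, -, -, h⟩
  · exact (Nat.pair_eq_pair.1 h).1
  · have h0 : 0 = tag b := singletonCode_injective (Nat.pair_eq_pair.1 h).2
    exact absurd h0.symm (pair_singletonCode_ne_zero b 0)

theorem k1Embedding_injective : Function.Injective k1Embedding := fun _ _ h =>
  tag_mem_k1Embedding_iff.1 (h ▸ tag_mem_k1Embedding)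

theorem scottApp_k1Embedding {a b c : ℕ} (h : c ∈ phi a b) :
    scottApp (k1Embedding a) (k1Embedding b) = k1Embedding c := by
  ext x
  constructor
  · rintro ⟨u, hxu, hu⟩
    rcases mem_k1Embedding_iff.1 hxu with hxu | ⟨b', c', y, hc', hy, hxu⟩
    · obtain ⟨rfl, rfl⟩ := Nat.pair_eq_pair.1 hxu
      rw [ofNat_singletonCode] at hu
      exact absurd rfl (ne_zero_of_mem_k1Embedding (hu (Finset.mem_singleton_self 0)))
    · obtain ⟨rfl, rfl⟩ := Nat.pair_eq_pair.1 hxu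
      rw [ofNat_singletonCode] at hu
      obtain rfl : b' = b := tag_mem_k1Embedding_iff.1 (hu (Finset.mem_singleton_self _))
      rwa [Part.mem_unique h hc']
  · intro hx
    refine ⟨singletonCode (tag b), mem_k1Embedding_iff.2 (Or.inr ⟨b, c, x, h, hx, rfl⟩), ?_⟩
    rw [ofNat_singletonCode]
    simpa using tag_mem_k1Embedding

open Nat.Partrec (Code)

theorem Computable₂.rePred_exists {α β : Type*} [Primcodable α] [Denumerable β]
    {f : α → β → Bool} (hf : Computable₂ f) : REPred fun a => ∃ b, f a b = true := by
  have htest : Computable₂ fun a k => f a (Denumerable.ofNat β k) :=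
    hf.comp Computable.fst ((Computable.ofNat β).comp Computable.snd)
  refine (Partrec.rfind htest.partrec₂).dom_re.of_eq fun a => ?_
  simp only [Nat.rfind_dom, PFun.coe_val, Part.mem_some_iff, Bool.true_eq, Part.some_dom,
    implies_true, and_true]
  exact ⟨fun ⟨k, hk⟩ => ⟨_, hk⟩, fun ⟨b, hb⟩ => ⟨Encodable.encode b, by simpa using hb⟩⟩

def evalnIter (s n : ℕ) (bs : List ℕ) : Option ℕ :=
  bs.foldlM (fun c b => Code.evaln s (Denumerable.ofNat Code c) b) n

theorem mem_evalnIter_cons {s n b d : ℕ} {bs : List ℕ} :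
    d ∈ evalnIter s n (b :: bs) ↔
      ∃ c ∈ Code.evaln s (Denumerable.ofNat Code n) b, d ∈ evalnIter s c bs := by
  show d ∈ (Code.evaln s (Denumerable.ofNat Code n) b).bind (fun c => evalnIter s c bs) ↔ _
  exact Option.mem_bind_iff

theorem evalnIter_mono {s s' : ℕ} (hs : s ≤ s') {n d : ℕ} {bs : List ℕ}
    (h : d ∈ evalnIter s n bs) : d ∈ evalnIter s' n bs := by
  induction bs generalizing n with
  | nil => exact h
  | cons b bs ih =>
    obtain ⟨c, hc, hd⟩ := mem_evalnIter_cons.1 h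
    exact mem_evalnIter_cons.2 ⟨c, Code.evaln_mono hs hc, ih hd⟩

theorem mem_kleeneIter_iff {n d : ℕ} {bs : List ℕ} :
    d ∈ kleeneIter n bs ↔ ∃ s, d ∈ evalnIter s n bs := by
  induction bs generalizing n with
  | nil => simp [kleeneIter_nil, evalnIter, eq_comm]
  | cons b bs ih =>
    rw [mem_kleeneIter_cons]
    constructor
    · rintro ⟨c, hc, hd⟩
      obtain ⟨s₁, hs₁⟩ := Code.evaln_complete.1 hc
      obtain ⟨s₂, hs₂⟩ := ih.1 hd
      exact ⟨max s₁ s₂, mem_evalnIter_cons.2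
        ⟨c, Code.evaln_mono (le_max_left _ _) hs₁, evalnIter_mono (le_max_right _ _) hs₂⟩⟩
    · rintro ⟨s, hs⟩
      obtain ⟨c, hc, hd⟩ := mem_evalnIter_cons.1 hs
      exact ⟨c, Code.evaln_sound hc, ih.2 ⟨s, hd⟩⟩

theorem primrec_evalnIter : Primrec fun q : (ℕ × ℕ) × List ℕ => evalnIter q.1.1 q.1.2 q.2 := by
  have hstep : Primrec₂ fun (q : (ℕ × ℕ) × List ℕ) (p : Option ℕ × ℕ) =>
      p.1.bind fun c => Code.evaln q.1.1 (Denumerable.ofNat Code c) p.2 :=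
    Primrec.option_bind (Primrec.fst.comp Primrec.snd) <|
      Code.primrec_evaln.comp₂ <| Primrec₂.pair.comp₂
        (Primrec₂.pair.comp₂
          (Primrec.fst.comp (Primrec.fst.comp (Primrec.fst.comp Primrec.fst))).to₂
          ((Primrec.ofNat Code).comp Primrec.snd).to₂)
        (Primrec.snd.comp (Primrec.snd.comp Primrec.fst)).to₂
  refine (Primrec.list_foldl Primrec.snd
    (Primrec.option_some.comp (Primrec.snd.comp Primrec.fst)) hstep).of_eq fun q => ?_
  simp [evalnIter, List.foldlM_eq_foldl]

theorem primrec_singletonCode : Primrec singletonCode :=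
  Primrec.succ.comp (Primrec₂.natPair.comp Primrec.id (Primrec.const 0))

theorem primrec_tag : Primrec tag :=
  Primrec₂.natPair.comp Primrec.id (Primrec.const (singletonCode 0))

theorem primrec₂_pathCode : Primrec₂ pathCode :=
  Primrec.list_foldr Primrec.snd (primrec_tag.comp Primrec.fst) <|
    Primrec₂.natPair.comp (Primrec.snd.comp Primrec.snd)
      (primrec_singletonCode.comp (primrec_tag.comp (Primrec.fst.comp Primrec.snd))) |>.to₂

theorem rePred_mem_k1Embedding (n : ℕ) : REPred (· ∈ k1Embedding n) := by
  have hrun : Primrec fun p : ℕ × ℕ × List ℕ => (evalnIter p.2.1 n p.2.2).map (pathCode · p.2.2) :=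
    Primrec.option_map
      (primrec_evalnIter.comp
        (((Primrec.fst.comp Primrec.snd).pair (Primrec.const n)).pair
          (Primrec.snd.comp Primrec.snd)))
      (primrec₂_pathCode.comp Primrec.snd (Primrec.snd.comp (Primrec.snd.comp Primrec.fst)))
  have hcheck : Primrec₂ fun (x : ℕ) (q : ℕ × List ℕ) =>
      decide ((evalnIter q.1 n q.2).map (pathCode · q.2) = some x) :=
    (Primrec.eq.comp hrun (Primrec.option_some.comp Primrec.fst)).decide
  refine hcheck.to_comp.rePred_exists.of_eq fun x => ?_
  simp only [decide_eq_true_eq, Option.map_eq_some_iff, k1Embedding, Set.mem_ofPred_eq,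
    mem_kleeneIter_iff]
  exact ⟨fun ⟨⟨s, bs⟩, c, hc, hx⟩ => ⟨bs, c, ⟨s, hc⟩, hx⟩,
    fun ⟨bs, c, ⟨s, hc⟩, hx⟩ => ⟨(s, bs), c, hc, hx⟩⟩

/-- Kleene's first model `K₁` weakly embeds into Scott's model `ℰ`: there is
an injective `f : ℕ → Set ℕ` with each `f n` c.e. such that `φ_a(b) = c`
implies `(f a) · (f b) = f c` for Scott's application. Thus `ℰ` is a weak
completion of `K₁`. -/
theorem K1_embeds_into_scott_ce_model :
    ∃ f : ℕ → Set ℕ, Function.Injective f ∧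
      (∀ n : ℕ, REPred (· ∈ f n)) ∧
      ∀ a b c : ℕ, phi a b = Part.some c → scottApp (f a) (f b) = f c :=
  ⟨k1Embedding, k1Embedding_injective, rePred_mem_k1Embedding,
    fun _ _ _ h => scottApp_k1Embedding (Part.eq_some_iff.1 h)⟩
end

section
/- Let (A, app) be a pas containing elements k, s such that for all a, b, c ∈ A: k·a is defined and (k·a)·b is defined and equals a; s·a is defined and (s·a)·b is defined; and ((s·a)·b)·c ≃ (a·c)·(b·c) (Kleene equality: both sides undefined, or both defined and equal). If A contains at least two distinct elements, then A is infinite. -/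
/-- A pas with combinators `k`, `s` (in the sense of Feferman's theorem) that
has two distinct elements is infinite. -/
theorem pca_infinite {A : Type*} (app : A → A → Part A) (k s : A)
    (hk : ∀ a b : A, (app k a).Dom ∧ papp app (app k a) (Part.some b) = Part.some a)
    (hs : ∀ a b c : A, (app s a).Dom ∧ (papp app (app s a) (Part.some b)).Dom ∧
      papp app (papp app (app s a) (Part.some b)) (Part.some c) =
        papp app (app a c) (app b c))
    (x y : A) (hxy : x ≠ y) : Infinite A := by
  classical
  have hKdom : ∀ a : A, (app k a).Dom := fun a => (hk a a).1
  set K : A → A := fun a => (app k a).get (hKdom a) with hKdef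
  have hKsome : ∀ a, app k a = Part.some (K a) := fun a => (Part.some_get (hKdom a)).symm
  have hKapp : ∀ a b, app (K a) b = Part.some a := by
    intro a b
    have h := (hk a b).2
    rw [hKsome a] at h
    simpa [papp] using h
  have hSdom : ∀ a : A, (app s a).Dom := fun a => (hs a a a).1
  set S1 : A → A := fun a => (app s a).get (hSdom a) with hS1def
  have hS1some : ∀ a, app s a = Part.some (S1 a) := fun a => (Part.some_get (hSdom a)).symm
  have hS2dom : ∀ a b : A, (app (S1 a) b).Dom := by
    intro a b
    have h := (hs a b b).2.1
    rw [hS1some a] at h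
    simpa [papp] using h
  set S2 : A → A → A := fun a b => (app (S1 a) b).get (hS2dom a b) with hS2def
  have hS2some : ∀ a b, app (S1 a) b = Part.some (S2 a b) :=
    fun a b => (Part.some_get (hS2dom a b)).symm
  have hS2app : ∀ a b c, app (S2 a b) c = papp app (app a c) (app b c) := by
    intro a b c
    have h := (hs a b c).2.2
    rw [hS1some a] at h
    simp only [papp, Part.bind_some] at h
    rw [hS2some a b] at h
    simp only [Part.bind_some] at h
    simpa [papp] using h
  -- identity
  set I : A := S2 k k with hIdef
  have hIapp : ∀ a, app I a = Part.some a := by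
    intro a
    rw [hIdef, hS2app, hKsome a]
    simp [papp, hKapp]
  -- false
  set F : A := K I with hFdef
  have hFapp : ∀ a, app F a = Part.some I := fun a => hKapp I a
  -- pairing
  set P : A → A → A := fun a b => S2 (S2 I (K a)) (K b) with hPdef
  have hSIK : ∀ a c, app (S2 I (K a)) c = app c a := by
    intro a c
    rw [hS2app, hIapp, hKapp]
    simp [papp]
  have hPapp : ∀ a b c, app (P a b) c = (app c a).bind (fun g => app g b) := by
    intro a b c
    rw [hPdef]
    rw [hS2app, hSIK, hKapp]
    simp [papp]
  have hPk : ∀ a b, app (P a b) k = Part.some a := by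
    intro a b
    rw [hPapp, hKsome a]
    simp [hKapp]
  have hPF : ∀ a b, app (P a b) F = Part.some b := by
    intro a b
    rw [hPapp, hFapp]
    simp [hIapp]
  -- k ≠ F
  have hkF : k ≠ F := by
    intro h
    have hKI : ∀ a : A, K a = I := by
      intro a
      have : app k a = Part.some I := by rw [h]; exact hFapp a
      rw [hKsome a] at this
      exact Part.some_injective this
    have : Part.some x = Part.some y := by
      calc Part.some x = app (K x) y := (hKapp x y).symm
        _ = app I y := by rw [hKI x]
        _ = Part.some y := hIapp y
    exact hxy (Part.some_injective this)
  -- numerals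
  set N : ℕ → A := fun n => Nat.rec I (fun _ m => P F m) n with hNdef
  have hN0 : app (N 0) k = Part.some k := hIapp k
  have hNsk : ∀ n, app (N (n+1)) k = Part.some F := fun n => hPk F (N n)
  have hNsF : ∀ n, app (N (n+1)) F = Part.some (N n) := fun n => hPF F (N n)
  have hinj : Function.Injective N := by
    intro m n h
    induction m generalizing n with
    | zero =>
      cases n with
      | zero => rfl
      | succ n =>
        exfalso
        have : Part.some k = Part.some F := by rw [← hN0, h, hNsk]
        exact hkF (Part.some_injective this)
    | succ m ih =>
      cases n with
      | zero =>
        exfalso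
        have : Part.some F = Part.some k := by rw [← hNsk m, h, hN0]
        exact hkF (Part.some_injective this).symm
      | succ n =>
        have : Part.some (N m) = Part.some (N n) := by rw [← hNsF m, h, hNsF]
        exact congrArg Nat.succ (ih (Part.some_injective this))
  exact Infinite.of_injective N hinj
end
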